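/- arXiv:math/0611938 — 4 statements merged into one kernel-verified Lean document; each statement's English description precedes it below -/
import Mathlib

section
/- Let φ be a conjugate-linear endomorphism of V which is skew-symmetric with respect to Re h. Then the map B_φ(x,y) := h(x, φ(y)) is a ℂ-bilinear alternating form on V, and the assignment φ ↦ B_φ is an ℝ-linear bijection from the space of conjugate-linear Re h-skew endomorphisms of V onto the space of alternating complex bilinear forms on V. -/
/-- A conjugate-linear map on a complex vector space (packaged as an ℝ-linear map). -/
def IsConjLinearMap {V : Type*} [AddCommGroup V] [Module ℂ V] (φ : V →ₗ[ℝ] V) : Prop :=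
  ∀ (c : ℂ) (v : V), φ (c • v) = (starRingEnd ℂ c) • φ v

/-- Skew-symmetry with respect to the real part of `h`. -/
def IsRehSkew {V : Type*} [AddCommGroup V] [Module ℂ V] (h : V → V → ℂ)
    (φ : V →ₗ[ℝ] V) : Prop :=
  ∀ x y : V, (h (φ x) y).re + (h x (φ y)).re = 0

/-- An alternating complex bilinear form. -/
def IsAltCBilin {V : Type*} [AddCommGroup V] [Module ℂ V] (B : V → V → ℂ) : Prop :=
  (∀ x x' y : V, B (x + x') y = B x y + B x' y) ∧
  (∀ x y y' : V, B x (y + y') = B x y + B x y') ∧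
  (∀ (c : ℂ) (x y : V), B (c • x) y = c * B x y) ∧
  (∀ (c : ℂ) (x y : V), B x (c • y) = c * B x y) ∧
  (∀ x : V, B x x = 0)

/-- Auxiliary: a bilinear form with vanishing real part on the diagonal is alternating. -/
lemma alt_of_re_diag_zero {V : Type*} [AddCommGroup V] [Module ℂ V] (B : V → V → ℂ)
    (h1 : ∀ x x' y : V, B (x + x') y = B x y + B x' y)
    (h2 : ∀ x y y' : V, B x (y + y') = B x y + B x y')
    (h3 : ∀ (c : ℂ) (x y : V), B (c • x) y = c * B x y)
    (h4 : ∀ (c : ℂ) (x y : V), B x (c • y) = c * B x y)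
    (hre : ∀ x : V, (B x x).re = 0) : ∀ x : V, B x x = 0 := by
  intro x
  have e : B (x + Complex.I • x) (x + Complex.I • x) = 2 * Complex.I * B x x := by
    simp only [h1, h2, h3, h4]
    linear_combination (B x x) * Complex.I_sq
  have him := hre (x + Complex.I • x)
  rw [e] at him
  simp only [Complex.mul_re, Complex.mul_im, Complex.I_re, Complex.I_im, Complex.re_ofNat,
    Complex.im_ofNat] at him
  apply Complex.ext
  · exact hre x
  · simp only [Complex.zero_im]; linarith

/-- For `φ` conjugate-linear and `Re h`-skew, `B_φ(x,y) := h(x, φ y)`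
is an alternating complex bilinear form, and `φ ↦ B_φ` is an ℝ-linear bijection
onto the space of alternating complex bilinear forms. -/
theorem conjlinear_skew_equiv_alternating
    {V : Type*} [AddCommGroup V] [Module ℂ V] [FiniteDimensional ℂ V]
    (h : V → V → ℂ)
    (hsmul : ∀ (c : ℂ) (v w : V), h (c • v) w = c * h v w)
    (hadd : ∀ u v w : V, h (u + v) w = h u w + h v w)
    (hherm : ∀ v w : V, h w v = starRingEnd ℂ (h v w))
    (hnd : ∀ v : V, (∀ w : V, h v w = 0) → v = 0) :
    (∀ φ : V →ₗ[ℝ] V, IsConjLinearMap φ → IsRehSkew h φ →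
      IsAltCBilin (fun x y => h x (φ y))) ∧
    (∀ φ ψ : V →ₗ[ℝ] V, IsConjLinearMap φ → IsRehSkew h φ →
      IsConjLinearMap ψ → IsRehSkew h ψ →
      (∀ x y : V, h x (φ y) = h x (ψ y)) → φ = ψ) ∧
    (∀ φ ψ : V →ₗ[ℝ] V, ∀ a : ℝ, ∀ x y : V,
      h x ((a • φ + ψ) y) = a * h x (φ y) + h x (ψ y)) ∧
    (∀ B : V → V → ℂ, IsAltCBilin B →
      ∃ φ : V →ₗ[ℝ] V, IsConjLinearMap φ ∧ IsRehSkew h φ ∧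
        ∀ x y : V, B x y = h x (φ y)) := by
  -- second-argument versions of the axioms
  have hadd2 : ∀ x v w : V, h x (v + w) = h x v + h x w := by
    intro x v w
    rw [hherm (v + w) x, hadd, map_add, ← hherm, ← hherm]
  have hsmul2 : ∀ (c : ℂ) (x v : V), h x (c • v) = (starRingEnd ℂ c) * h x v := by
    intro c x v
    rw [hherm (c • v) x, hsmul, map_mul, ← hherm]
  have hnd2 : ∀ v : V, (∀ x : V, h x v = 0) → v = 0 := by
    intro v hv
    refine hnd v fun w => ?_
    rw [hherm w v, hv w, map_zero]
  have hsub2 : ∀ x v w : V, h x (v - w) = h x v - h x w := by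
    intro x v w
    have : v - w = v + (-1 : ℂ) • w := by rw [neg_one_smul]; abel
    rw [this, hadd2, hsmul2]
    simp [sub_eq_add_neg]
  have hrsmul2 : ∀ (a : ℝ) (x v : V), h x (a • v) = (a : ℂ) * h x v := by
    intro a x v
    have : (a : ℝ) • v = ((a : ℂ)) • v := rfl
    rw [this, hsmul2, Complex.conj_ofReal]
  refine ⟨?_, ?_, ?_, ?_⟩
  · -- part 1
    intro φ hc hs
    have e2 : ∀ x y y' : V, h x (φ (y + y')) = h x (φ y) + h x (φ y') := by
      intro x y y'; rw [map_add, hadd2]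
    have e4 : ∀ (c : ℂ) (x y : V), h x (φ (c • y)) = c * h x (φ y) := by
      intro c x y; rw [hc c y, hsmul2, Complex.conj_conj]
    refine ⟨fun x x' y => hadd x x' (φ y), e2, fun c x y => hsmul c x (φ y), e4, ?_⟩
    refine alt_of_re_diag_zero (fun x y => h x (φ y)) (fun x x' y => hadd x x' (φ y))
      e2 (fun c x y => hsmul c x (φ y)) e4 ?_
    intro x
    have h1 := hs x x
    have h2 : (h (φ x) x).re = (h x (φ x)).re := by
      rw [hherm x (φ x), Complex.conj_re]
    linarith
  · -- part 2: injectivity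
    intro φ ψ _ _ _ _ hxy
    ext y
    have : φ y - ψ y = 0 := by
      refine hnd2 _ fun x => ?_
      rw [hsub2, hxy, sub_self]
    simpa [sub_eq_zero] using this
  · -- part 3: real linearity
    intro φ ψ a x y
    simp only [LinearMap.add_apply, LinearMap.smul_apply]
    rw [hadd2, hrsmul2]
  · -- part 4: surjectivity
    intro B hB
    obtain ⟨b1, b2, b3, b4, b5⟩ := hB
    have hanti : ∀ x y : V, B x y + B y x = 0 := by
      intro x y
      have e := b5 (x + y)
      rw [b1, b2, b2, b5, b5] at e
      linear_combination e
    -- the map v ↦ h · v as an ℝ-linear map into the complex dual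
    let H : V →ₗ[ℝ] (V →ₗ[ℂ] ℂ) :=
      { toFun := fun v =>
          { toFun := fun x => h x v
            map_add' := fun x x' => hadd x x' v
            map_smul' := fun c x => hsmul c x v }
        map_add' := fun v w => LinearMap.ext fun x => hadd2 x v w
        map_smul' := fun a v => LinearMap.ext fun x => by
          simp only [LinearMap.coe_mk, AddHom.coe_mk, RingHom.id_apply, LinearMap.smul_apply,
            Complex.real_smul]
          exact hrsmul2 a x v }
    have hinj : Function.Injective H := by
      intro v w hvw
      have : v - w = 0 := by
        refine hnd2 _ fun x => ?_
        have := congrArg (fun f => f x) hvw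
        simp only [H, LinearMap.coe_mk, AddHom.coe_mk] at this
        rw [hsub2, this, sub_self]
      simpa [sub_eq_zero] using this
    have hfr : Module.finrank ℝ V = Module.finrank ℝ (V →ₗ[ℂ] ℂ) := by
      rw [← Module.finrank_mul_finrank ℝ ℂ V, ← Module.finrank_mul_finrank ℝ ℂ (V →ₗ[ℂ] ℂ),
        Subspace.dual_finrank_eq]
    have hsurj : Function.Surjective H :=
      (LinearMap.injective_iff_surjective_of_finrank_eq_finrank hfr).mp hinj
    let e := LinearEquiv.ofBijective H ⟨hinj, hsurj⟩
    -- the map y ↦ B · y as an ℝ-linear map into the complex dual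
    let G : V →ₗ[ℝ] (V →ₗ[ℂ] ℂ) :=
      { toFun := fun y =>
          { toFun := fun x => B x y
            map_add' := fun x x' => b1 x x' y
            map_smul' := fun c x => b3 c x y }
        map_add' := fun y y' => LinearMap.ext fun x => b2 x y y'
        map_smul' := fun a y => LinearMap.ext fun x => by
          simp only [LinearMap.coe_mk, AddHom.coe_mk, RingHom.id_apply, LinearMap.smul_apply,
            Complex.real_smul]
          have : (a : ℝ) • y = ((a : ℂ)) • y := rfl
          rw [this, b4] }
    refine ⟨e.symm.toLinearMap ∘ₗ G, ?_, ?_, ?_⟩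
    case refine_3 =>
      intro x y
      have he : H (e.symm (G y)) = G y := e.apply_symm_apply (G y)
      have := congrArg (fun f => f x) he
      simpa [H, G] using this.symm
    case refine_1 =>
      intro c y
      have key : ∀ z : V, ∀ x : V, h x (e.symm (G z)) = B x z := by
        intro z x
        have he : H (e.symm (G z)) = G z := e.apply_symm_apply (G z)
        have := congrArg (fun f => f x) he
        simpa [H, G] using this
      simp only [LinearMap.coe_comp, Function.comp_apply, LinearEquiv.coe_coe]
      have : e.symm (G (c • y)) - (starRingEnd ℂ c) • e.symm (G y) = 0 := by
        refine hnd2 _ fun x => ?_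
        rw [hsub2, key, b4, hsmul2, key, Complex.conj_conj, sub_self]
      simpa [sub_eq_zero] using this
    case refine_2 =>
      intro x y
      have key : ∀ z : V, ∀ x : V, h x (e.symm (G z)) = B x z := by
        intro z x
        have he : H (e.symm (G z)) = G z := e.apply_symm_apply (G z)
        have := congrArg (fun f => f x) he
        simpa [H, G] using this
      simp only [LinearMap.coe_comp, Function.comp_apply, LinearEquiv.coe_coe]
      have h1 : h ((e.symm (G x) : V)) y = starRingEnd ℂ (h y (e.symm (G x))) := hherm y _
      have h2 := congrArg Complex.re (hanti x y)
      rw [h1, key, Complex.conj_re, key]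
      simp only [Complex.add_re, Complex.zero_re] at h2
      linarith
end

section
/- Let (W,b) be a real vector space with a nondegenerate symmetric bilinear form and let v ∈ W be a nonzero null vector. Define 𝔭₊ to be the set of b-skew-symmetric endomorphisms φ of W satisfying φ(v) = 0 and φ(w) ∈ ℝ·v for every w orthogonal to v. Then 𝔭₊ is an abelian Lie subalgebra of 𝔰𝔬(W,b): for all φ, ψ ∈ 𝔭₊ one has φ∘ψ = ψ∘φ. -/
/-- For a nonzero null vector `v` of a nondegenerate symmetric bilinear
form `b`, the set `𝔭₊` of `b`-skew endomorphisms killing `v` and mapping `v^⊥` into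
`ℝ·v` is an abelian Lie subalgebra of `𝔰𝔬(W,b)`: it is a subspace and any two of its
elements commute. -/
theorem pplus_abelian
    {W : Type*} [AddCommGroup W] [Module ℝ W]
    (b : LinearMap.BilinForm ℝ W)
    (hsymm : ∀ x y : W, b x y = b y x)
    (hnd : ∀ x : W, (∀ y : W, b x y = 0) → x = 0)
    (v : W) (hv : v ≠ 0) (hvnull : b v v = 0) :
    let P : Set (Module.End ℝ W) :=
      {φ | (∀ x y : W, b (φ x) y + b x (φ y) = 0) ∧ φ v = 0 ∧
        ∀ w : W, b v w = 0 → ∃ t : ℝ, φ w = t • v}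
    ((0 : Module.End ℝ W) ∈ P) ∧
    (∀ φ ψ : Module.End ℝ W, φ ∈ P → ψ ∈ P → φ + ψ ∈ P) ∧
    (∀ (a : ℝ) (φ : Module.End ℝ W), φ ∈ P → a • φ ∈ P) ∧
    (∀ φ ψ : Module.End ℝ W, φ ∈ P → ψ ∈ P → φ * ψ = ψ * φ) := by
  intro P
  refine ⟨⟨fun x y => by simp, by simp, fun w hw => ⟨0, by simp⟩⟩, ?_, ?_, ?_⟩
  · rintro φ ψ ⟨hφ1, hφ2, hφ3⟩ ⟨hψ1, hψ2, hψ3⟩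
    refine ⟨fun x y => ?_, by simp [hφ2, hψ2], fun w hw => ?_⟩
    · have h1 := hφ1 x y
      have h2 := hψ1 x y
      simp only [LinearMap.add_apply, map_add, LinearMap.BilinForm.add_left] at *
      linarith
    · obtain ⟨t, ht⟩ := hφ3 w hw
      obtain ⟨s, hs⟩ := hψ3 w hw
      exact ⟨t + s, by simp [ht, hs, add_smul]⟩
  · rintro a φ ⟨hφ1, hφ2, hφ3⟩
    refine ⟨fun x y => ?_, by simp [hφ2], fun w hw => ?_⟩
    · have h1 := hφ1 x y
      simp only [LinearMap.smul_apply, LinearMap.BilinForm.smul_left, map_smul,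
        smul_eq_mul] at *
      linear_combination a * h1
    · obtain ⟨t, ht⟩ := hφ3 w hw
      exact ⟨a * t, by simp [ht, mul_smul]⟩
  · rintro φ ψ ⟨hφ1, hφ2, hφ3⟩ ⟨hψ1, hψ2, hψ3⟩
    -- φ and ψ map everything into v^⊥
    have hφperp : ∀ x, b v (φ x) = 0 := by
      intro x
      have := hφ1 v x
      rw [hφ2] at this
      simpa using this
    have hψperp : ∀ x, b v (ψ x) = 0 := by
      intro x
      have := hψ1 v x
      rw [hψ2] at this
      simpa using this
    -- compositions vanish on v^⊥
    have h1 : ∀ w, b v w = 0 → φ (ψ w) = 0 := by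
      intro w hw
      obtain ⟨s, hs⟩ := hψ3 w hw
      rw [hs, map_smul, hφ2, smul_zero]
    have h2 : ∀ w, b v w = 0 → ψ (φ w) = 0 := by
      intro w hw
      obtain ⟨s, hs⟩ := hφ3 w hw
      rw [hs, map_smul, hψ2, smul_zero]
    -- choose y₀ not orthogonal to v
    obtain ⟨y0, hy0⟩ : ∃ y, b v y ≠ 0 := by
      by_contra h
      push_neg at h
      exact hv (hnd v h)
    -- compositions agree on y₀
    have hy : φ (ψ y0) = ψ (φ y0) := by
      obtain ⟨t, ht⟩ := hφ3 (ψ y0) (hψperp y0)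
      obtain ⟨s, hs⟩ := hψ3 (φ y0) (hφperp y0)
      have e1 : t * b v y0 = -(b (ψ y0) (φ y0)) := by
        have := hφ1 (ψ y0) y0
        rw [ht] at this
        simp only [LinearMap.BilinForm.smul_left, smul_eq_mul] at this
        linarith
      have e2 : s * b v y0 = -(b (φ y0) (ψ y0)) := by
        have := hψ1 (φ y0) y0
        rw [hs] at this
        simp only [LinearMap.BilinForm.smul_left, smul_eq_mul] at this
        linarith
      have hts : t = s := by
        have hsym := hsymm (ψ y0) (φ y0)
        have : t * b v y0 = s * b v y0 := by rw [e1, e2, hsym]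
        exact mul_right_cancel₀ hy0 this
      rw [ht, hs, hts]
    -- conclude
    ext x
    simp only [Module.End.mul_apply]
    set c := b v x / b v y0 with hc
    have hw : b v (x - c • y0) = 0 := by
      rw [map_sub, map_smul, smul_eq_mul, hc, div_mul_cancel₀ _ hy0, sub_self]
    have hx : x = c • y0 + (x - c • y0) := by abel
    have l1 : φ (ψ x) = c • φ (ψ y0) := by
      conv_lhs => rw [hx]
      rw [map_add, map_add, map_smul, map_smul, h1 _ hw, add_zero]
    have l2 : ψ (φ x) = c • ψ (φ y0) := by
      conv_lhs => rw [hx]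
      rw [map_add, map_add, map_smul, map_smul, h2 _ hw, add_zero]
    rw [l1, l2, hy]
end

section
/- Let V be a complex vector space with a nondegenerate Hermitian form h of indefinite signature (so there exist both positive and negative vectors), and let v ∈ V be a nonzero vector with h(v,v) = 0. Suppose φ : V → V is conjugate-linear, skew-symmetric with respect to Re h, annihilates ℝ·v, and maps the Re h-orthocomplement of ℝ·v into ℝ·v. Then φ = 0. -/
/-- Let `h` be a nondegenerate Hermitian form of indefinite signature
on a complex vector space and `v ≠ 0` an `h`-null vector. If `φ` is conjugate-linear,
skew for `Re h`, annihilates `ℝ·v`, and maps the `Re h`-orthocomplement of `ℝ·v` into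
`ℝ·v`, then `φ = 0`. -/
theorem conjlinear_pplus_vanishes
    {V : Type*} [AddCommGroup V] [Module ℂ V] [FiniteDimensional ℂ V]
    (h : V → V → ℂ)
    (hsmul : ∀ (c : ℂ) (v w : V), h (c • v) w = c * h v w)
    (hadd : ∀ u v w : V, h (u + v) w = h u w + h v w)
    (hherm : ∀ v w : V, h w v = starRingEnd ℂ (h v w))
    (hnd : ∀ v : V, (∀ w : V, h v w = 0) → v = 0)
    (hpos : ∃ p : V, 0 < (h p p).re) (hneg : ∃ q : V, (h q q).re < 0)
    (v : V) (hv : v ≠ 0) (hvnull : h v v = 0)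
    (φ : V →ₗ[ℝ] V)
    (hconj : ∀ (c : ℂ) (x : V), φ (c • x) = (starRingEnd ℂ c) • φ x)
    (hskew : ∀ x y : V, (h (φ x) y).re + (h x (φ y)).re = 0)
    (hkill : φ v = 0)
    (hperp : ∀ w : V, (h v w).re = 0 → ∃ t : ℝ, φ w = t • v) :
    φ = 0 := by
  -- antilinearity of h in the second argument
  have hsmul' : ∀ (c : ℂ) (x y : V), h x (c • y) = (starRingEnd ℂ c) * h x y := by
    intro c x y
    rw [hherm (c • y) x, hsmul, map_mul, ← hherm]
  have hadd' : ∀ x y z : V, h x (y + z) = h x y + h x z := by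
    intro x y z
    rw [hherm (y + z) x, hadd, map_add, ← hherm, ← hherm]
  have hzero2 : ∀ x : V, h x 0 = 0 := by
    intro x
    have := hsmul' 0 x x
    simpa using this
  have hsub' : ∀ x y z : V, h x (y - z) = h x y - h x z := by
    intro x y z
    have : h x (y - z + z) = h x (y - z) + h x z := hadd' x (y - z) z
    simp only [sub_add_cancel] at this
    linear_combination -this
  -- Step 1: φ vanishes on the complex orthocomplement of v
  have step1 : ∀ x : V, h v x = 0 → φ x = 0 := by
    intro x hx
    obtain ⟨t, ht⟩ := hperp x (by rw [hx]; simp)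
    obtain ⟨s, hs⟩ := hperp (Complex.I • x)
      (by rw [hsmul', hx]; simp)
    rw [hconj, ht] at hs
    -- hs : conj I • (t • v) = s • v
    have e1 : (t : ℝ) • v = ((t : ℂ)) • v := by
      rw [← algebraMap_smul ℂ t v]; norm_num
    have e2 : (s : ℝ) • v = ((s : ℂ)) • v := by
      rw [← algebraMap_smul ℂ s v]; norm_num
    rw [e1, e2, smul_smul] at hs
    have hzero : (((s:ℂ) - starRingEnd ℂ Complex.I * (t:ℂ))) • v = 0 := by
      rw [sub_smul, hs, sub_self]
    rcases smul_eq_zero.mp hzero with hc | hv0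
    · have ht0 : (t : ℝ) = 0 := by
        have := congrArg Complex.im hc
        simpa [Complex.conj_I] using this
      rw [ht, ht0, zero_smul]
    · exact absurd hv0 hv
  -- Step 2: find u with h v u = 1
  obtain ⟨w0, hw0⟩ : ∃ w, h v w ≠ 0 := by
    by_contra hc
    push_neg at hc
    exact hv (hnd v hc)
  obtain ⟨u, hvu⟩ : ∃ u : V, h v u = 1 :=
    ⟨((starRingEnd ℂ (h v w0))⁻¹) • w0, by
      rw [hsmul', map_inv₀, Complex.conj_conj, inv_mul_cancel₀ hw0]⟩
  -- re of h x (I • y) is im of h x y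
  have hreI : ∀ x y : V, (h x (Complex.I • y)).re = (h x y).im := by
    intro x y
    rw [hsmul']
    simp [Complex.conj_I, Complex.mul_re]
  -- Step 3: h (φ u) x = 0 whenever h v x = 0
  have step3 : ∀ x : V, h v x = 0 → h (φ u) x = 0 := by
    intro x hx
    have h1 : (h (φ u) x).re = 0 := by
      have := hskew u x
      rw [step1 x hx, hzero2] at this
      simpa using this
    have h2 : (h (φ u) x).im = 0 := by
      have hIx : h v (Complex.I • x) = 0 := by rw [hsmul', hx, mul_zero]
      have := hskew u (Complex.I • x)
      rw [step1 _ hIx, hzero2, hreI] at this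
      simpa using this
    exact Complex.ext h1 h2
  -- Step 4: h (φ u) u = 0
  have step4 : h (φ u) u = 0 := by
    have hre : (h (φ u) u).re = 0 := by
      have := hskew u u
      have e : (h u (φ u)).re = (h (φ u) u).re := by
        rw [hherm (φ u) u]; simp
      rw [e] at this
      linarith
    have him : (h (φ u) u).im = 0 := by
      have t1 := hskew u (Complex.I • u)
      rw [hreI, hconj] at t1
      have e : h u ((starRingEnd ℂ Complex.I) • φ u) = Complex.I * starRingEnd ℂ (h (φ u) u) := by
        rw [hsmul', Complex.conj_conj, hherm (φ u) u]
      rw [e] at t1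
      have : (Complex.I * starRingEnd ℂ (h (φ u) u)).re = (h (φ u) u).im := by
        simp [Complex.mul_re]
      rw [this] at t1
      linarith
    exact Complex.ext hre him
  -- Step 5: φ u = 0
  have hφu : φ u = 0 := by
    apply hnd
    intro y
    have hdecomp : y = (y - (starRingEnd ℂ (h v y)) • u) + (starRingEnd ℂ (h v y)) • u := by
      exact (sub_add_cancel y _).symm
    have hxperp : h v (y - (starRingEnd ℂ (h v y)) • u) = 0 := by
      rw [hsub', hsmul', Complex.conj_conj, hvu, mul_one, sub_self]
    calc h (φ u) y
        = h (φ u) ((y - (starRingEnd ℂ (h v y)) • u) + (starRingEnd ℂ (h v y)) • u) := by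
          rw [← hdecomp]
      _ = h (φ u) (y - (starRingEnd ℂ (h v y)) • u)
            + starRingEnd ℂ (starRingEnd ℂ (h v y)) * h (φ u) u := by
          rw [hadd', hsmul']
      _ = 0 := by rw [step3 _ hxperp, step4, mul_zero, add_zero]
  -- Conclusion
  ext y
  have hxperp : h v (y - (starRingEnd ℂ (h v y)) • u) = 0 := by
    rw [hsub', hsmul', Complex.conj_conj, hvu, mul_one, sub_self]
  have : φ y = φ (y - (starRingEnd ℂ (h v y)) • u) + φ ((starRingEnd ℂ (h v y)) • u) := by
    rw [← map_add, sub_add_cancel]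
  rw [this, step1 _ hxperp, hconj, hφu, smul_zero, add_zero, LinearMap.zero_apply]
end

section
/- Let h be a nondegenerate symmetric bilinear form on a real vector space W, J an orthogonal complex structure on W, and suppose X, Y ∈ W are null vectors with h(X,Y) = 1 and h(JX,Y) = 0. Then the four vectors X, JX, Y, JY are linearly independent, the restriction of h to their span is nondegenerate, and the h-orthocomplement of this span is J-invariant. -/
/-- If `X, Y` are null, `h X Y = 1` and `h (J X) Y = 0` for an
orthogonal complex structure `J`, then `X, JX, Y, JY` are linearly independent, `h`
restricted to their span is nondegenerate, and the `h`-orthocomplement of that span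
is `J`-invariant. -/
theorem hyperbolic_quadruple_span
    {W : Type*} [AddCommGroup W] [Module ℝ W]
    (h : LinearMap.BilinForm ℝ W)
    (hsymm : ∀ x y : W, h x y = h y x)
    (hnd : ∀ x : W, (∀ y : W, h x y = 0) → x = 0)
    (J : Module.End ℝ W) (hJ2 : ∀ x : W, J (J x) = -x)
    (horth : ∀ x y : W, h (J x) (J y) = h x y)
    (X Y : W) (hX : h X X = 0) (hY : h Y Y = 0)
    (hXY : h X Y = 1) (hJXY : h (J X) Y = 0) :
    LinearIndependent ℝ ![X, J X, Y, J Y] ∧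
    (∀ w ∈ Submodule.span ℝ ({X, J X, Y, J Y} : Set W),
      (∀ u ∈ Submodule.span ℝ ({X, J X, Y, J Y} : Set W), h w u = 0) → w = 0) ∧
    (∀ w : W, (∀ u ∈ Submodule.span ℝ ({X, J X, Y, J Y} : Set W), h u w = 0) →
      ∀ u ∈ Submodule.span ℝ ({X, J X, Y, J Y} : Set W), h u (J w) = 0) := by
  have hskew : ∀ x y : W, h (J x) y = - h x (J y) := by
    intro x y
    have h1 := horth (J x) y
    rw [hJ2 x] at h1
    rw [← h1]
    simp
  -- Gram matrix values
  have hYX : h Y X = 1 := by rw [hsymm]; exact hXY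
  have hXJX : h X (J X) = 0 := by
    have := hskew X X
    rw [hsymm (J X) X] at this
    linarith
  have hJXX : h (J X) X = 0 := by rw [hsymm]; exact hXJX
  have hYJY : h Y (J Y) = 0 := by
    have := hskew Y Y
    rw [hsymm (J Y) Y] at this
    linarith
  have hJYY : h (J Y) Y = 0 := by rw [hsymm]; exact hYJY
  have hXJY : h X (J Y) = 0 := by
    have := hskew X Y
    rw [hJXY] at this
    linarith
  have hJYX : h (J Y) X = 0 := by rw [hsymm]; exact hXJY
  have hYJX : h Y (J X) = 0 := by rw [hsymm]; exact hJXY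
  have hJXJX : h (J X) (J X) = 0 := by rw [horth]; exact hX
  have hJYJY : h (J Y) (J Y) = 0 := by rw [horth]; exact hY
  have hJXJY : h (J X) (J Y) = 1 := by rw [horth]; exact hXY
  have hJYJX : h (J Y) (J X) = 1 := by rw [hsymm]; exact hJXJY
  have hXmem : X ∈ Submodule.span ℝ ({X, J X, Y, J Y} : Set W) :=
    Submodule.subset_span (by simp)
  have hJXmem : J X ∈ Submodule.span ℝ ({X, J X, Y, J Y} : Set W) :=
    Submodule.subset_span (by simp)
  have hYmem : Y ∈ Submodule.span ℝ ({X, J X, Y, J Y} : Set W) :=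
    Submodule.subset_span (by simp)
  have hJYmem : J Y ∈ Submodule.span ℝ ({X, J X, Y, J Y} : Set W) :=
    Submodule.subset_span (by simp)
  refine ⟨?_, ?_, ?_⟩
  · rw [Fintype.linearIndependent_iff]
    intro g hg i
    have key : ∀ v : W, h (∑ i, g i • ![X, J X, Y, J Y] i) v = 0 := by
      intro v; rw [hg]; simp
    have e0 := key Y
    have e1 := key (J Y)
    have e2 := key X
    have e3 := key (J X)
    simp only [Fin.sum_univ_four, Matrix.cons_val_zero, Matrix.cons_val_one, Matrix.head_cons,
      Matrix.cons_val_two, Matrix.tail_cons, Matrix.cons_val_three, map_add, map_smul,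
      LinearMap.add_apply, LinearMap.smul_apply, smul_eq_mul, hX, hY, hXY, hYX, hXJX, hJXX,
      hYJY, hJYY, hXJY, hJYX, hYJX, hJXY, hJXJX, hJYJY, hJXJY, hJYJX] at e0 e1 e2 e3
    fin_cases i <;> simp <;> linarith
  · intro w hw hperp
    rw [show ({X, J X, Y, J Y} : Set W) = insert X (insert (J X) (insert Y {J Y})) from rfl]
      at hw
    rw [Submodule.mem_span_insert] at hw
    obtain ⟨a, z, hz, rfl⟩ := hw
    rw [Submodule.mem_span_insert] at hz
    obtain ⟨b, z2, hz2, rfl⟩ := hz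
    rw [Submodule.mem_span_insert] at hz2
    obtain ⟨c, z3, hz3, rfl⟩ := hz2
    rw [Submodule.mem_span_singleton] at hz3
    obtain ⟨d, rfl⟩ := hz3
    have e0 := hperp Y hYmem
    have e1 := hperp (J Y) hJYmem
    have e2 := hperp X hXmem
    have e3 := hperp (J X) hJXmem
    simp only [map_add, map_smul, LinearMap.add_apply, LinearMap.smul_apply, smul_eq_mul,
      hX, hY, hXY, hYX, hXJX, hJXX, hYJY, hJYY, hXJY, hJYX, hYJX, hJXY, hJXJX, hJYJY,
      hJXJY, hJYJX] at e0 e1 e2 e3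
    have ha : a = 0 := by linarith
    have hb : b = 0 := by linarith
    have hc : c = 0 := by linarith
    have hd : d = 0 := by linarith
    rw [ha, hb, hc, hd]; simp
  · intro w hw u hu
    have hJu : J u ∈ Submodule.span ℝ ({X, J X, Y, J Y} : Set W) := by
      induction hu using Submodule.span_induction with
      | mem x hx =>
        rcases hx with rfl | rfl | rfl | rfl
        · exact hJXmem
        · rw [hJ2]; exact Submodule.neg_mem _ hXmem
        · exact hJYmem
        · rw [hJ2]; exact Submodule.neg_mem _ hYmem
      | zero => simp
      | add x y _ _ hx hy => rw [map_add]; exact Submodule.add_mem _ hx hy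
      | smul r x _ hx => rw [map_smul]; exact Submodule.smul_mem _ r hx
    have := hskew u w
    rw [hw (J u) hJu] at this
    linarith
end
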